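/- Let p be a prime and c > 2 an integer. Then the limit as n → ∞ of #V(p^n, 0)/p^{(2c−1)n} exists and equals (1 − p^{−c})/(1 − p^{−(c−1)}), where V(p^n, 0) = {(x,y) ∈ ((ℤ/p^nℤ)^c)^2 : x·y ≡ 0 (mod p^n)}. -/

import Mathlib

/-!
Fix `x ∈ (ℤ/p^n)^c` and let `p^w` (`w ≤ n`) be the largest power of `p` dividing all its
coordinates. Some coordinate of `x` is `p^w` times a unit, so `y ↦ x·y` maps onto the ideal
`(p^w)`, which has `p^(n-w)` elements; hence its kernel has `p^(nc-n+w)` elements and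
`#V(p^n,0) / p^((2c-1)n)` is the average of `p^w` over all `x`. Writing
`p^w = 1 + ∑_{k<w} (p^(k+1) - p^k)` and using that `p^(k+1)` divides every coordinate of exactly
a proportion `p^(-(k+1)c)` of the `x`, this average is `1 + (1 - p⁻¹) ∑_{k<n} p^(-(k+1)(c-1))`,
a partial sum of a convergent geometric series.
-/

open Filter

/-- The number of pairs `(x, y)` of vectors in `((ℤ/mℤ)^c)^2` whose dot product is
the residue of `ℓ` modulo `m`. -/
noncomputable def Vcard (c m : ℕ) (ℓ : ℤ) : ℕ :=
  Nat.card {xy : (Fin c → ZMod m) × (Fin c → ZMod m) //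
    (∑ i, xy.1 i * xy.2 i) = (ℓ : ZMod m)}

open Finset

theorem AddMonoidHom.card_ker_mul_card_range {G H : Type*} [AddGroup G] [AddGroup H]
    (f : G →+ H) : Nat.card f.ker * Nat.card f.range = Nat.card G := by
  rw [← AddSubgroup.index_ker, AddSubgroup.card_mul_index]

theorem Finset.sum_range_ite_lt_sub_pow {R : Type*} [CommRing R] (a : R) {w n : ℕ}
    (hw : w ≤ n) :
    ∑ k ∈ range n, (if k < w then a ^ (k + 1) - a ^ k else 0) = a ^ w - 1 := by
  have hfilter : {k ∈ range n | k < w} = range w := by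
    ext; simp only [mem_filter, mem_range]; omega
  rw [← sum_filter, hfilter, sum_range_sub (a ^ ·), pow_zero]

namespace ZMod

variable {m d : ℕ} [NeZero m]

theorem natCast_dvd_iff_dvd_val (hd : d ∣ m) (z : ZMod m) :
    (d : ZMod m) ∣ z ↔ d ∣ z.val := by
  constructor
  · rintro ⟨a, rfl⟩
    rw [← natCast_zmod_val a, ← Nat.cast_mul, val_natCast]
    exact (Nat.dvd_mod_iff hd).2 (dvd_mul_right d _)
  · rintro ⟨t, ht⟩
    exact ⟨t, by rw [← natCast_zmod_val z, ht, Nat.cast_mul]⟩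

/-- The multiples of `d` form the kernel of the surjection `ZMod m → ZMod d`. -/
theorem card_natCast_dvd (hd : d ∣ m) : Nat.card {z : ZMod m // (d : ZMod m) ∣ z} = m / d := by
  have hd0 : d ≠ 0 := by rintro rfl; exact NeZero.ne m (zero_dvd_iff.1 hd)
  let f := (castHom hd (ZMod d)).toAddMonoidHom
  have hker : ∀ z, z ∈ f.ker ↔ (d : ZMod m) ∣ z := fun z => by
    rw [AddMonoidHom.mem_ker, natCast_dvd_iff_dvd_val hd, ← natCast_eq_zero_iff, ← cast_eq_val]
    rfl
  have key := f.card_ker_mul_card_range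
  rw [AddMonoidHom.range_eq_top.2 (castHom_surjective hd), AddSubgroup.card_top, Nat.card_zmod,
    Nat.card_zmod] at key
  rw [← Nat.card_congr (Equiv.subtypeEquivRight hker)]
  exact Nat.eq_div_of_mul_eq_left hd0 key

end ZMod

def vecVal (p n : ℕ) [NeZero (p ^ n)] {c : ℕ} (x : Fin c → ZMod (p ^ n)) : ℕ :=
  Nat.findGreatest (fun k => ∀ i, (p : ZMod (p ^ n)) ^ k ∣ x i) n

section PrimePowerModulus

variable {p n c : ℕ} [hp : Fact p.Prime]

theorem ZMod.isUnit_of_not_natCast_dvd {u : ZMod (p ^ n)} (hu : ¬ (p : ZMod (p ^ n)) ∣ u) :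
    IsUnit u := by
  have hpu : ¬ p ∣ u.val := fun h => hu (by simpa using Nat.cast_dvd_cast (α := ZMod (p ^ n)) h)
  rw [← ZMod.natCast_zmod_val u, ZMod.isUnit_iff_coprime]
  exact ((hp.out.coprime_iff_not_dvd.2 hpu).pow_left n).symm

theorem vecVal_le (x : Fin c → ZMod (p ^ n)) : vecVal p n x ≤ n := Nat.findGreatest_le n

theorem pow_vecVal_dvd (x : Fin c → ZMod (p ^ n)) (i : Fin c) :
    (p : ZMod (p ^ n)) ^ vecVal p n x ∣ x i :=
  Nat.findGreatest_spec (P := fun k => ∀ i, (p : ZMod (p ^ n)) ^ k ∣ x i) (Nat.zero_le n)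
    (by simp) i

theorem forall_pow_dvd_iff_le_vecVal {x : Fin c → ZMod (p ^ n)} {k : ℕ} (hk : k ≤ n) :
    (∀ i, (p : ZMod (p ^ n)) ^ k ∣ x i) ↔ k ≤ vecVal p n x :=
  ⟨Nat.le_findGreatest (P := fun k => ∀ i, (p : ZMod (p ^ n)) ^ k ∣ x i) hk,
    fun h i => (pow_dvd_pow _ h).trans (pow_vecVal_dvd x i)⟩

theorem exists_eq_pow_vecVal_mul_unit {x : Fin c → ZMod (p ^ n)} (hx : vecVal p n x < n) :
    ∃ j, ∃ u : (ZMod (p ^ n))ˣ, x j = (p : ZMod (p ^ n)) ^ vecVal p n x * u := by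
  obtain ⟨j, hj⟩ := not_forall.1 (mt (forall_pow_dvd_iff_le_vecVal (x := x) hx).1 (by omega))
  obtain ⟨u, hu⟩ := pow_vecVal_dvd x j
  refine ⟨j, (ZMod.isUnit_of_not_natCast_dvd fun hpu => hj ?_).unit, hu⟩
  rw [hu, pow_succ]
  exact mul_dvd_mul_left _ hpu

theorem exists_dotProduct_eq_iff (x : Fin c → ZMod (p ^ n)) (b : ZMod (p ^ n)) :
    (∃ y, x ⬝ᵥ y = b) ↔ (p : ZMod (p ^ n)) ^ vecVal p n x ∣ b := by
  constructor
  · rintro ⟨y, rfl⟩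
    exact dvd_sum fun i _ => (pow_vecVal_dvd x i).mul_right _
  · rintro ⟨a, rfl⟩
    rcases (vecVal_le x).lt_or_eq with hlt | heq
    · obtain ⟨j, u, hu⟩ := exists_eq_pow_vecVal_mul_unit hlt
      refine ⟨Pi.single j (↑u⁻¹ * a), ?_⟩
      rw [dotProduct_single, hu, mul_assoc, Units.mul_inv_cancel_left]
    · refine ⟨0, ?_⟩
      rw [heq, ← Nat.cast_pow, ZMod.natCast_self, zero_mul, dotProduct_zero]

theorem card_dotProduct_eq_zero_mul_pow (x : Fin c → ZMod (p ^ n)) :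
    Nat.card {y : Fin c → ZMod (p ^ n) // x ⬝ᵥ y = 0} * p ^ n =
      p ^ (n * c + vecVal p n x) := by
  let f := AddMonoidHom.mk' (x ⬝ᵥ ·) (dotProduct_add x)
  have hrange : Nat.card f.range = p ^ (n - vecVal p n x) := by
    have h := ZMod.card_natCast_dvd (m := p ^ n) (pow_dvd_pow p (vecVal_le x))
    rw [Nat.cast_pow, Nat.pow_div (vecVal_le x) hp.out.pos] at h
    rw [← h]
    exact Nat.card_congr (Equiv.subtypeEquivRight (exists_dotProduct_eq_iff x))
  have key := f.card_ker_mul_card_range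
  rw [hrange, Nat.card_fun, Nat.card_zmod, Nat.card_fin, ← pow_mul] at key
  calc Nat.card f.ker * p ^ n = Nat.card f.ker * p ^ (n - vecVal p n x) * p ^ vecVal p n x := by
        rw [mul_assoc, ← pow_add, Nat.sub_add_cancel (vecVal_le x)]
    _ = p ^ (n * c + vecVal p n x) := by rw [key, pow_add]

theorem Vcard_mul_pow :
    Vcard c (p ^ n) 0 * p ^ n = p ^ (n * c) * ∑ x : Fin c → ZMod (p ^ n), p ^ vecVal p n x := by
  change Nat.card {xy : _ × _ // xy.1 ⬝ᵥ xy.2 = ((0 : ℤ) : ZMod (p ^ n))} * _ = _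
  rw [Int.cast_zero, Nat.card_congr (Equiv.subtypeProdEquivSigmaSubtype fun x y => x ⬝ᵥ y = 0),
    Nat.card_sigma, sum_mul, mul_sum]
  exact sum_congr rfl fun x _ => by rw [card_dotProduct_eq_zero_mul_pow x, pow_add]

theorem card_forall_pow_dvd {j : ℕ} (hj : j ≤ n) :
    Nat.card {x : Fin c → ZMod (p ^ n) // ∀ i, (p : ZMod (p ^ n)) ^ j ∣ x i} =
      p ^ ((n - j) * c) := by
  have h := ZMod.card_natCast_dvd (m := p ^ n) (pow_dvd_pow p hj)
  rw [Nat.cast_pow, Nat.pow_div hj hp.out.pos] at h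
  rw [Nat.card_congr (Equiv.subtypePiEquivPi (p := fun _ z => (p : ZMod (p ^ n)) ^ j ∣ z)),
    Nat.card_pi, prod_const, h, card_univ, Fintype.card_fin, pow_mul]

theorem pow_vecVal_eq_one_add_sum (x : Fin c → ZMod (p ^ n)) :
    (p : ℝ) ^ vecVal p n x = 1 + ∑ k ∈ range n,
      if ∀ i, (p : ZMod (p ^ n)) ^ (k + 1) ∣ x i then (p : ℝ) ^ (k + 1) - (p : ℝ) ^ k
      else 0 := by
  rw [sum_congr rfl fun k hk => if_congr
      ((forall_pow_dvd_iff_le_vecVal (mem_range.1 hk)).trans Nat.add_one_le_iff) rfl rfl,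
    sum_range_ite_lt_sub_pow _ (vecVal_le x)]
  ring

theorem sum_pow_vecVal :
    ∑ x : Fin c → ZMod (p ^ n), (p : ℝ) ^ vecVal p n x = (p : ℝ) ^ (n * c) +
      ∑ k ∈ range n, (p : ℝ) ^ ((n - (k + 1)) * c) *
        ((p : ℝ) ^ (k + 1) - (p : ℝ) ^ k) := by
  simp_rw [pow_vecVal_eq_one_add_sum, sum_add_distrib]
  rw [sum_comm]
  congr 1
  · simp [pow_mul]
  · refine sum_congr rfl fun k hk => ?_
    rw [sum_ite, sum_const_zero, add_zero, sum_const, nsmul_eq_mul, ← Fintype.card_subtype,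
      ← Nat.card_eq_fintype_card, card_forall_pow_dvd (mem_range.1 hk), Nat.cast_pow]

theorem sum_pow_vecVal_div (hc : 0 < c) :
    (∑ x : Fin c → ZMod (p ^ n), (p : ℝ) ^ vecVal p n x) / (p : ℝ) ^ (n * c) =
      1 + (1 - (p : ℝ)⁻¹) * ∑ k ∈ range n, ((p : ℝ)⁻¹ ^ (c - 1)) ^ (k + 1) := by
  have hp0 : (p : ℝ) ≠ 0 := by exact_mod_cast hp.out.ne_zero
  rw [sum_pow_vecVal, add_div, div_self (pow_ne_zero _ hp0), sum_div, mul_sum]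
  congr 1
  refine sum_congr rfl fun k hk => ?_
  obtain ⟨m, rfl⟩ := Nat.exists_eq_add_of_lt (mem_range.1 hk)
  obtain ⟨d, rfl⟩ := Nat.exists_eq_add_of_lt hc
  simp only [zero_add, Nat.add_sub_cancel, show k + m + 1 - (k + 1) = m by omega, inv_pow,
    ← pow_mul]
  field_simp
  ring

theorem Vcard_div_pow_eq (hc : 0 < c) :
    (Vcard c (p ^ n) 0 : ℝ) / (p : ℝ) ^ ((2 * c - 1) * n) =
      (∑ x : Fin c → ZMod (p ^ n), (p : ℝ) ^ vecVal p n x) / (p : ℝ) ^ (n * c) := by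
  have hp0 : (p : ℝ) ≠ 0 := by exact_mod_cast hp.out.ne_zero
  have hV := congrArg (Nat.cast : ℕ → ℝ) (Vcard_mul_pow (p := p) (n := n) (c := c))
  push_cast at hV
  have hexp : (p : ℝ) ^ ((2 * c - 1) * n) * (p : ℝ) ^ n =
      (p : ℝ) ^ (n * c) * (p : ℝ) ^ (n * c) := by
    rw [← pow_add, ← pow_add, ← Nat.succ_mul, Nat.succ_eq_add_one,
      Nat.sub_add_cancel (by omega)]
    ring_nf
  rw [div_eq_div_iff (pow_ne_zero _ hp0) (pow_ne_zero _ hp0)]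
  apply mul_right_cancel₀ (pow_ne_zero n hp0)
  rw [mul_right_comm, hV, mul_assoc _ (_ ^ ((2 * c - 1) * n)), hexp]
  ring

end PrimePowerModulus

theorem stmt2 (p c : ℕ) (hp : p.Prime) (hc : 2 < c) :
    Tendsto (fun n : ℕ => (Vcard c (p ^ n) 0 : ℝ) / (p : ℝ) ^ ((2 * c - 1) * n))
      atTop
      (nhds ((1 - (p : ℝ) ^ (-(c : ℤ))) / (1 - (p : ℝ) ^ (-((c : ℤ) - 1))))) := by
  have : Fact p.Prime := ⟨hp⟩
  set q := (p : ℝ)⁻¹ with hq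
  have hq0 : 0 ≤ q := by positivity
  have hr1 : q ^ (c - 1) < 1 :=
    pow_lt_one₀ hq0 (inv_lt_one_of_one_lt₀ (by exact_mod_cast hp.one_lt)) (by omega)
  have hgeom := ((hasSum_geometric_of_lt_one (pow_nonneg hq0 _) hr1).mul_left
    (q ^ (c - 1))).tendsto_sum_nat
  convert (hgeom.const_mul (1 - q)).const_add 1 using 2 with n
  · simp only [Vcard_div_pow_eq (by omega : 0 < c), sum_pow_vecVal_div (by omega : 0 < c),
      pow_succ', ← hq]
  · have h1 : (p : ℝ) ^ (-((c : ℤ) - 1)) = q ^ (c - 1) := by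
      rw [← Nat.cast_one, ← Nat.cast_sub (by omega), zpow_neg, zpow_natCast, inv_pow]
    have h2 : (p : ℝ) ^ (-(c : ℤ)) = q * q ^ (c - 1) := by
      rw [← pow_succ', Nat.sub_add_cancel (by omega), zpow_neg, zpow_natCast, inv_pow]
    rw [h1, h2]
    field_simp [(sub_pos.2 hr1).ne']
    ring
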